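/- For every n ≥ 1 and every partition λ of n, the local simplex dimension of λ equals the maximum of its star-capacity and top-capacity: dim_loc(λ) = max{s(λ), t(λ)}. -/

import Mathlib

namespace PartitionLayers

open Nat Multiset

/-! ## The partition graph and local simplex dimension -/

/-- `q` is obtained from `p` by an elementary transfer: decrease one part by 1
(possibly deleting it if it reaches 0) and increase another part by 1
(where `b = 0` encodes the creation of a new part of size 1). -/
def IsTransfer {n : ℕ} (p q : Nat.Partition n) : Prop :=
  ∃ a ∈ p.parts, ∃ b : ℕ, (b = 0 ∨ b ∈ p.parts.erase a) ∧
    q.parts = (b + 1) ::ₘ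
      (if a = 1 then (p.parts.erase a).erase b
       else (a - 1) ::ₘ (p.parts.erase a).erase b)

/-- The partition graph `G_n` on `Par(n)`. -/
def partitionGraph (n : ℕ) : SimpleGraph (Nat.Partition n) where
  Adj p q := p ≠ q ∧ (IsTransfer p q ∨ IsTransfer q p)
  symm := ⟨fun _ _ h => ⟨h.1.symm, h.2.symm⟩⟩
  loopless := ⟨fun _ h => h.1 rfl⟩

/-- `ω_loc(λ)`: the maximum size of a clique of `G_n` containing `λ`. -/
noncomputable def omegaLoc {n : ℕ} (p : Nat.Partition n) : ℕ :=
  sSup {k | ∃ s : Finset (Nat.Partition n), (partitionGraph n).IsNClique k s ∧ p ∈ s}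

/-- The local simplex dimension `dim_loc(λ) = ω_loc(λ) - 1`. -/
noncomputable def dimLoc {n : ℕ} (p : Nat.Partition n) : ℕ :=
  omegaLoc p - 1

/-- The simplex layer `L_r(n) = {λ ⊢ n : dim_loc(λ) = r}`. -/
noncomputable def layer (n r : ℕ) : Set (Nat.Partition n) :=
  {p | dimLoc p = r}

/-- The realized layer spectrum `Spec_Δ(n)`. -/
noncomputable def Spec (n : ℕ) : Set ℕ :=
  {r | (layer n r).Nonempty}

/-- The top local simplex dimension `Δ_loc(n) = max_{λ ⊢ n} dim_loc(λ)`. -/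
noncomputable def DeltaLoc (n : ℕ) : ℕ :=
  sSup (Set.range (dimLoc (n := n)))

/-- The bottom local simplex dimension `δ_loc(n) = min_{λ ⊢ n} dim_loc(λ)`. -/
noncomputable def deltaLoc (n : ℕ) : ℕ :=
  sInf (Set.range (dimLoc (n := n)))

/-- The first-occurrence index `n_r^first = min {n ≥ 1 : L_r(n) ≠ ∅}`. -/
noncomputable def nFirst (r : ℕ) : ℕ :=
  sInf {n | 1 ≤ n ∧ (layer n r).Nonempty}

/-! ## Conjugation -/

private lemma conj_sum_aux (N : ℕ) (s : Multiset ℕ) (hs : ∀ x ∈ s, x ≤ N) :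
    ((Multiset.range N).map fun j => s.countP (fun p => decide (j < p))).sum = s.sum := by
  induction s using Multiset.induction with
  | empty => simp
  | cons a s ih =>
      have ha : a ≤ N := hs a (mem_cons_self a s)
      have hs' : ∀ x ∈ s, x ≤ N := fun x hx => hs x (mem_cons_of_mem hx)
      have hcnt : ∀ j : ℕ, (a ::ₘ s).countP (fun p => decide (j < p)) =
          s.countP (fun p => decide (j < p)) + if j < a then 1 else 0 := by
        intro j
        rw [countP_cons]
        simp
      have hone : (∑ j ∈ Finset.range N, if j < a then (1 : ℕ) else 0) = a := by
        have hsub : Finset.range a ⊆ Finset.range N := Finset.range_subset_range.mpr ha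
        rw [← Finset.sum_subset hsub (fun j _ hj => if_neg (by simpa using hj))]
        calc (∑ j ∈ Finset.range a, if j < a then (1 : ℕ) else 0)
            = ∑ _j ∈ Finset.range a, (1 : ℕ) :=
              Finset.sum_congr rfl (fun j hj => if_pos (Finset.mem_range.mp hj))
          _ = a := by simp
      calc ((Multiset.range N).map fun j => (a ::ₘ s).countP (fun p => decide (j < p))).sum
          = ((Multiset.range N).map fun j =>
              s.countP (fun p => decide (j < p)) + if j < a then 1 else 0).sum := by
            congr 1
            exact Multiset.map_congr rfl (fun j _ => hcnt j)
        _ = ((Multiset.range N).map fun j => s.countP (fun p => decide (j < p))).sum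
              + ((Multiset.range N).map fun j => if j < a then 1 else 0).sum := by
            rw [← Multiset.sum_map_add]
        _ = s.sum + a := by
            rw [ih hs']
            congr 1
        _ = (a ::ₘ s).sum := by rw [Multiset.sum_cons]; omega

/-- The conjugate (transpose) partition `λ'`: its `j`-th column length is the
number of parts of `λ` exceeding `j`. -/
def conj {n : ℕ} (p : Nat.Partition n) : Nat.Partition n :=
  Nat.Partition.ofSums n
    ((Multiset.range n).map fun j => p.parts.countP (fun q => decide (j < q)))
    (by
      have hle : ∀ x ∈ p.parts, x ≤ n := by
        intro x hx
        have h1 := Multiset.single_le_sum (fun y _ => Nat.zero_le y) x hx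
        rw [p.parts_sum] at h1
        exact h1
      rw [conj_sum_aux n p.parts hle]
      exact p.parts_sum)

/-! ## Corners, admissible transfers, and the star/top capacities -/

/-- The weakly decreasing part function of a partition: `partFun p i` is the
`i`-th part (0-indexed), with value `0` beyond the number of parts.  Its Young
diagram is `{(i, j) : j < partFun p i}`. -/
def partFun {n : ℕ} (p : Nat.Partition n) : ℕ → ℕ :=
  fun i => ((p.parts.sort (· ≤ ·)).reverse).getD i 0

/-- Row `i` contains a removable corner of the diagram with row lengths `f`
(namely the cell `(i, f i - 1)`). -/
def HasRemovableCorner (f : ℕ → ℕ) (i : ℕ) : Prop :=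
  f (i + 1) < f i

/-- Row `j` contains an addable corner of the diagram with row lengths `f`
(namely the position `(j, f j)`). -/
def HasAddableCorner (f : ℕ → ℕ) (j : ℕ) : Prop :=
  j = 0 ∨ f j < f (j - 1)

/-- The row-length function obtained by moving one cell from the end of row `i`
to the end of row `j`. -/
def transferFun (f : ℕ → ℕ) (i j : ℕ) : ℕ → ℕ :=
  Function.update (Function.update f i (f i - 1)) j (f j + 1)

/-- The transfer `λ(c → a)` moving the removable corner in row `i` to the
addable corner in row `j` is admissible: it yields a partition (the resulting
row lengths are weakly decreasing) distinct from the original one. -/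
def AdmissibleTransfer (f : ℕ → ℕ) (i j : ℕ) : Prop :=
  HasRemovableCorner f i ∧ HasAddableCorner f j ∧ i ≠ j ∧
    ∀ k, transferFun f i j (k + 1) ≤ transferFun f i j k

/-- The star-capacity `s(λ)`: the maximum, over removable corners `c` of `λ`,
of the number of addable corners `a` with `λ(c → a)` admissible.  (Rows are
indexed in `range (n+1)`, which contains all corner rows; rows without a
removable corner contribute `0`.) -/
noncomputable def sCap {n : ℕ} (p : Nat.Partition n) : ℕ :=
  (Finset.range (n + 1)).sup fun i =>
    Set.ncard {j | AdmissibleTransfer (partFun p) i j}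

/-- The top-capacity `t(λ)`: the maximum, over addable corners `a` of `λ`,
of the number of removable corners `c` with `λ(c → a)` admissible. -/
noncomputable def tCap {n : ℕ} (p : Nat.Partition n) : ℕ :=
  (Finset.range (n + 1)).sup fun j =>
    Set.ncard {i | AdmissibleTransfer (partFun p) i j}

/-! ## Adjacent-layer phase boundaries -/

/-- The adjacent-layer edge boundary `∂^E_{r,r+1}(n)`: edges of `G_n` joining
`L_r(n)` to `L_{r+1}(n)`. -/
noncomputable def edgeBoundary (n r : ℕ) : Set (Sym2 (Nat.Partition n)) :=
  {e | ∃ p q, (partitionGraph n).Adj p q ∧ p ∈ layer n r ∧ q ∈ layer n (r + 1) ∧ e = s(p, q)}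

/-- The adjacent-layer vertex boundary `∂^V_{r,r+1}(n)`: vertices incident to
an edge of `∂^E_{r,r+1}(n)`. -/
noncomputable def vertexBoundary (n r : ℕ) : Set (Nat.Partition n) :=
  {v | ∃ e ∈ edgeBoundary n r, v ∈ e}

/-- The lower-side boundary `∂^-_{r,r+1}(n) = ∂^V_{r,r+1}(n) ∩ L_r(n)`. -/
noncomputable def lowerBoundary (n r : ℕ) : Set (Nat.Partition n) :=
  vertexBoundary n r ∩ layer n r

/-- The upper-side boundary `∂^+_{r,r+1}(n) = ∂^V_{r,r+1}(n) ∩ L_{r+1}(n)`. -/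
noncomputable def upperBoundary (n r : ℕ) : Set (Nat.Partition n) :=
  vertexBoundary n r ∩ layer n (r + 1)



/-- number of parts greater than `j` (column length of the diagram). -/
def colLen {n : ℕ} (p : Nat.Partition n) (j : ℕ) : ℕ :=
  p.parts.countP (fun x => j < x)

lemma countP_split (s : Multiset ℕ) (j : ℕ) :
    s.countP (fun x => j < x) =
      s.countP (fun x => j + 1 < x) + s.count (j + 1) := by
  induction s using Multiset.induction with
  | empty => simp
  | cons a t ih =>
      rw [countP_cons, countP_cons, count_cons, ih]
      split_ifs <;> omega

lemma colLen_succ_le {n : ℕ} (p : Nat.Partition n) (j : ℕ) :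
    colLen p (j + 1) ≤ colLen p j := by
  have h := countP_split p.parts j
  rw [colLen, colLen]
  omega

lemma colLen_anti {n : ℕ} (p : Nat.Partition n) : Antitone (colLen p) := by
  apply antitone_nat_of_succ_le
  exact colLen_succ_le p

lemma count_eq_colLen {n : ℕ} (p : Nat.Partition n) (v : ℕ) :
    p.parts.count (v + 1) = colLen p v - colLen p (v + 1) := by
  have := countP_split p.parts v
  rw [colLen, colLen]
  omega

lemma parts_le {n : ℕ} (p : Nat.Partition n) {x : ℕ} (hx : x ∈ p.parts) : x ≤ n := by
  have h1 := Multiset.single_le_sum (fun y _ => Nat.zero_le y) x hx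
  rw [p.parts_sum] at h1; exact h1

lemma colLen_eq_zero {n : ℕ} (p : Nat.Partition n) {j : ℕ} (hj : n ≤ j) : colLen p j = 0 := by
  rw [colLen, Multiset.countP_eq_zero]
  intro a ha
  have := parts_le p ha
  omega

lemma card_parts_le {n : ℕ} (p : Nat.Partition n) : Multiset.card p.parts ≤ n := by
  have : Multiset.card p.parts • 1 ≤ p.parts.sum := by
    apply Multiset.card_nsmul_le_sum
    intro x hx; exact p.parts_pos hx
  rw [p.parts_sum] at this; simpa using this

lemma colLen_le {n : ℕ} (p : Nat.Partition n) (j : ℕ) : colLen p j ≤ n :=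
  le_trans (Multiset.countP_le_card _ _) (card_parts_le p)

/-- `colLen` determines the partition. -/
lemma colLen_inj {n : ℕ} {p q : Nat.Partition n} (h : ∀ j, colLen p j = colLen q j) : p = q := by
  ext1
  ext v
  rcases Nat.eq_zero_or_pos v with rfl | hv
  · have hp : p.parts.count 0 = 0 := by
      rw [Multiset.count_eq_zero]; intro hc; exact absurd (p.parts_pos hc) (by simp)
    have hq : q.parts.count 0 = 0 := by
      rw [Multiset.count_eq_zero]; intro hc; exact absurd (q.parts_pos hc) (by simp)
    rw [hp, hq]
  · obtain ⟨w, rfl⟩ := Nat.exists_eq_add_of_le hv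
    rw [Nat.add_comm 1 w]
    rw [count_eq_colLen, count_eq_colLen, h, h]

/-! ### partFun vs colLen -/


lemma getD_le_of_forall_le {L : List ℕ} {j : ℕ} (h : ∀ y ∈ L, y ≤ j) (i : ℕ) :
    L.getD i 0 ≤ j := by
  by_cases hi : i < L.length
  · rw [List.getD_eq_getElem _ _ hi]; exact h _ (List.getElem_mem hi)
  · rw [List.getD_eq_default _ _ (le_of_not_gt hi)]; exact Nat.zero_le j

lemma sorted_desc_getD_lt_iff (j : ℕ) :
    ∀ (L : List ℕ), L.Pairwise (· ≥ ·) →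
      ∀ i, (j < L.getD i 0 ↔ i < L.countP (fun x => decide (j < x)))
  | [], _, i => by simp
  | x :: t, h, i => by
      have ht : t.Pairwise (· ≥ ·) := h.of_cons
      have hx : ∀ y ∈ t, y ≤ x := fun y hy => List.rel_of_pairwise_cons h hy
      by_cases hjx : j < x
      · rw [List.countP_cons_of_pos (by simpa using hjx)]
        cases i with
        | zero => simpa using hjx
        | succ i => simpa using sorted_desc_getD_lt_iff j t ht i
      · have hcount : t.countP (fun x => decide (j < x)) = 0 := by
          apply List.countP_eq_zero.mpr
          intro y hy
          have h1 := hx y hy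
          simp only [decide_eq_true_eq]
          omega
        rw [List.countP_cons_of_neg (by simpa using hjx), hcount]
        have hle : (x :: t).getD i 0 ≤ j :=
          getD_le_of_forall_le (by
            intro y hy
            rcases List.mem_cons.mp hy with rfl | hy'
            · omega
            · have := hx y hy'; omega) i
        constructor
        · intro hlt; omega
        · intro hlt; omega

lemma partFun_lt_iff {n : ℕ} (p : Nat.Partition n) (i j : ℕ) :
    j < partFun p i ↔ i < colLen p j := by
  set L := (p.parts.sort (· ≤ ·)).reverse with hL
  have hs : L.Pairwise (· ≥ ·) := by
    rw [hL, List.pairwise_reverse]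
    exact Multiset.pairwise_sort (s := p.parts) (r := (· ≤ ·))
  have hc : colLen p j = L.countP (fun x => decide (j < x)) := by
    rw [hL]
    rw [show (List.countP (fun x => decide (j < x)) (p.parts.sort (· ≤ ·)).reverse) =
        (List.countP (fun x => decide (j < x)) (p.parts.sort (· ≤ ·))) by
      simp [List.countP_eq_length_filter]]
    rw [colLen]
    conv_lhs => rw [← Multiset.sort_eq (s := p.parts) (r := (· ≤ ·))]
    rw [Multiset.coe_countP]
  rw [partFun, hc]
  exact sorted_desc_getD_lt_iff j L hs i

/-! ### Constructing a partition from a column-length function -/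

def mkParts (g : ℕ → ℕ) (n : ℕ) : Multiset ℕ :=
  (Multiset.range n).bind fun v => Multiset.replicate (g v - g (v + 1)) (v + 1)

lemma mkParts_pos {g : ℕ → ℕ} {n x : ℕ} (hx : x ∈ mkParts g n) : 0 < x := by
  obtain ⟨v, _, hx2⟩ := Multiset.mem_bind.mp hx
  obtain ⟨-, rfl⟩ := Multiset.mem_replicate.mp hx2
  omega

lemma mkParts_mem_le {g : ℕ → ℕ} {n x : ℕ} (hx : x ∈ mkParts g n) : x ≤ n := by
  obtain ⟨v, hv, hx2⟩ := Multiset.mem_bind.mp hx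
  obtain ⟨-, rfl⟩ := Multiset.mem_replicate.mp hx2
  have := Multiset.mem_range.mp hv
  omega

lemma mkParts_count (g : ℕ → ℕ) (n v : ℕ) (hv : v < n) :
    (mkParts g n).count (v + 1) = g v - g (v + 1) := by
  rw [mkParts, Multiset.count_bind]
  have : ∀ w ∈ Multiset.range n,
      (Multiset.replicate (g w - g (w + 1)) (w + 1)).count (v + 1) =
        (if w = v then g v - g (v + 1) else 0) := by
    intro w _
    rw [Multiset.count_replicate]
    rcases eq_or_ne w v with rfl | h
    · rw [if_pos rfl, if_pos rfl]
    · rw [if_neg (by omega), if_neg h]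
  rw [Multiset.map_congr rfl this, ← Finset.range_val n, ← Finset.sum]
  rw [Finset.sum_ite_eq' (Finset.range n) v (fun _ => g v - g (v + 1))]
  simp [hv]

lemma mkParts_colLen (g : ℕ → ℕ) (n : ℕ) (hg : ∀ t, g (t + 1) ≤ g t)
    (hg0 : g n = 0) : ∀ j, (mkParts g n).countP (fun x => j < x) = g j := by
  have hzero : ∀ j, n ≤ j → (mkParts g n).countP (fun x => j < x) = 0 := by
    intro j hj
    apply Multiset.countP_eq_zero.mpr
    intro x hx
    have := mkParts_mem_le hx
    omega
  have key : ∀ k, (mkParts g n).countP (fun x => (n - k) < x) = g (n - k) := by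
    intro k
    induction k with
    | zero =>
        simpa using (hzero n le_rfl).trans hg0.symm
    | succ k ih =>
        by_cases h : n ≤ k
        · have he : n - (k + 1) = n - k := by omega
          rw [he]; exact ih
        · have h2 : n - (k + 1) + 1 = n - k := by omega
          rw [countP_split, h2, ih]
          have hc := mkParts_count g n (n - (k + 1)) (by omega)
          rw [h2] at hc
          rw [hc]
          have := hg (n - (k + 1))
          rw [h2] at this
          omega
  intro j
  rcases le_or_gt j n with hj | hj
  · have := key (n - j); rwa [Nat.sub_sub_self hj] at this
  · rw [hzero j (by omega)]
    have hanti := antitone_nat_of_succ_le hg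
    have := hanti (le_of_lt hj)
    omega

lemma telescope_sum (g : ℕ → ℕ) (hg : ∀ t, g (t + 1) ≤ g t) :
    ∀ m, (∑ v ∈ Finset.range m, (g v - g (v + 1)) * (v + 1)) + m * g m
      = ∑ v ∈ Finset.range m, g v := by
  intro m
  induction m with
  | zero => simp
  | succ m ih =>
      rw [Finset.sum_range_succ, Finset.sum_range_succ]
      have h1 : (g m - g (m + 1)) * (m + 1) + (m + 1) * g (m + 1) = g m * (m + 1) := by
        rw [Nat.sub_mul, mul_comm (m + 1) (g (m + 1))]
        have : g (m + 1) * (m + 1) ≤ g m * (m + 1) :=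
          Nat.mul_le_mul_right _ (hg m)
        omega
      have h2 : g m * (m + 1) = m * g m + g m := by ring
      omega

lemma mkParts_sum (g : ℕ → ℕ) (n : ℕ) (hg : ∀ t, g (t + 1) ≤ g t) (hg0 : g n = 0) :
    (mkParts g n).sum = ∑ v ∈ Finset.range n, g v := by
  rw [mkParts, Multiset.sum_bind]
  have : ∀ w ∈ Multiset.range n,
      (Multiset.replicate (g w - g (w + 1)) (w + 1)).sum = (g w - g (w + 1)) * (w + 1) := by
    intro w _
    rw [Multiset.sum_replicate]
    simp [smul_eq_mul]
  rw [Multiset.map_congr rfl this, ← Finset.range_val n, ← Finset.sum]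
  have := telescope_sum g hg n
  rw [hg0] at this
  omega

/-- The partition with prescribed column lengths. -/
def mkPartition (n : ℕ) (g : ℕ → ℕ) (hg : ∀ t, g (t + 1) ≤ g t) (hg0 : g n = 0)
    (hsum : ∑ v ∈ Finset.range n, g v = n) : Nat.Partition n where
  parts := mkParts g n
  parts_pos := fun hx => mkParts_pos hx
  parts_sum := by rw [mkParts_sum g n hg hg0, hsum]

lemma mkPartition_colLen (n : ℕ) (g : ℕ → ℕ) (hg : ∀ t, g (t + 1) ≤ g t) (hg0 : g n = 0)
    (hsum : ∑ v ∈ Finset.range n, g v = n) (j : ℕ) :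
    colLen (mkPartition n g hg hg0 hsum) j = g j :=
  mkParts_colLen g n hg hg0 j

/-! ### Adjacency in terms of column moves -/

/-- `q` is obtained from `p` by removing a cell from column `jc` and adding a
cell in column `ja`. -/
def MoveEq {n : ℕ} (p q : Nat.Partition n) (jc ja : ℕ) : Prop :=
  jc ≠ ja ∧ ∀ j, colLen q j + (if j = jc then 1 else 0) = colLen p j + (if j = ja then 1 else 0)

lemma MoveEq.symm {n : ℕ} {p q : Nat.Partition n} {jc ja : ℕ} (h : MoveEq p q jc ja) :
    MoveEq q p ja jc := ⟨h.1.symm, fun j => (h.2 j).symm⟩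

lemma countP_erase {s : Multiset ℕ} {a : ℕ} (ha : a ∈ s) (j : ℕ) :
    s.countP (fun x => j < x) =
      (s.erase a).countP (fun x => j < x) + (if j < a then 1 else 0) := by
  conv_lhs => rw [← Multiset.cons_erase ha]
  rw [countP_cons]

lemma count_zero_parts {n : ℕ} (p : Nat.Partition n) : p.parts.count 0 = 0 := by
  rw [Multiset.count_eq_zero]
  intro hc
  exact absurd (p.parts_pos hc) (by simp)

lemma transfer_move {n : ℕ} {p q : Nat.Partition n} (ht : IsTransfer p q) (hne : p ≠ q) :
    ∃ jc ja, MoveEq p q jc ja := by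
  obtain ⟨a, ha, b, hb, hq⟩ := ht
  have hapos : 0 < a := p.parts_pos ha
  have key : ∀ j, colLen q j + (if j = a - 1 then 1 else 0)
      = colLen p j + (if j = b then 1 else 0) := by
    intro j
    have e1 : p.parts.countP (fun x => j < x) =
        (p.parts.erase a).countP (fun x => j < x) + (if j < a then 1 else 0) :=
      countP_erase ha j
    have e2 : (p.parts.erase a).countP (fun x => j < x) =
        ((p.parts.erase a).erase b).countP (fun x => j < x) + (if j < b then 1 else 0) := by
      rcases hb with rfl | hb
      · have h00 : (0 : ℕ) ∉ p.parts.erase a := fun hc => by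
          have := p.parts_pos (Multiset.mem_of_mem_erase hc); omega
        rw [Multiset.erase_of_notMem h00]
        simp
      · exact countP_erase hb j
    have e3 : q.parts.countP (fun x => j < x) =
        ((p.parts.erase a).erase b).countP (fun x => j < x)
          + (if j < b + 1 then 1 else 0) + (if j < a - 1 then 1 else 0) := by
      rw [hq]
      rcases eq_or_ne a 1 with rfl | ha1
      · rw [if_pos rfl, countP_cons]
        have : (if j < 1 - 1 then 1 else 0) = 0 := by simp
        omega
      · rw [if_neg ha1, countP_cons, countP_cons]
        omega
    rw [colLen, colLen, e3, e1, e2]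
    split_ifs <;> omega
  refine ⟨a - 1, b, fun hab => hne ?_, key⟩
  apply colLen_inj
  intro j
  have := key j
  rw [hab] at this
  omega

lemma moveEq_colLen {n : ℕ} {p q : Nat.Partition n} {jc ja : ℕ} (h : MoveEq p q jc ja) :
    colLen q jc + 1 = colLen p jc ∧ colLen q ja = colLen p ja + 1 ∧
      (∀ j, j ≠ jc → j ≠ ja → colLen q j = colLen p j) := by
  obtain ⟨hne, hC⟩ := h
  refine ⟨?_, ?_, ?_⟩
  · have := hC jc; rw [if_pos rfl, if_neg hne] at this; omega
  · have := hC ja; rw [if_pos rfl, if_neg (Ne.symm hne)] at this; omega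
  · intro j h1 h2; have := hC j; rw [if_neg h1, if_neg h2] at this; omega

lemma moveEq_ne {n : ℕ} {p q : Nat.Partition n} {jc ja : ℕ} (h : MoveEq p q jc ja) :
    p ≠ q := by
  intro he
  have := (moveEq_colLen h).1
  rw [he] at this
  omega

lemma move_transfer {n : ℕ} {p q : Nat.Partition n} {jc ja : ℕ} (h : MoveEq p q jc ja) :
    IsTransfer p q := by
  obtain ⟨hja, hC⟩ := h
  obtain ⟨hc1, hc2, hc3⟩ := moveEq_colLen ⟨hja, hC⟩
  have hCpanti := colLen_succ_le p
  have hCqanti := colLen_succ_le q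
  have hcount_a : 1 ≤ p.parts.count (jc + 1) := by
    rw [count_eq_colLen]
    have h2 : colLen q (jc + 1) ≥ colLen p (jc + 1) := by
      rcases eq_or_ne (jc + 1) ja with he | hne
      · rw [← he] at hc2; omega
      · rw [hc3 (jc + 1) (by omega) hne]
    have := hCqanti jc
    omega
  have ha : jc + 1 ∈ p.parts := Multiset.count_pos.mp (by omega)
  have hbcount : 0 < ja → 1 + (if ja = jc + 1 then 1 else 0) ≤ p.parts.count ja := by
    intro hpos
    obtain ⟨w, rfl⟩ : ∃ w, ja = w + 1 := ⟨ja - 1, by omega⟩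
    rw [count_eq_colLen]
    have h1 : colLen q (w + 1) = colLen p (w + 1) + 1 := hc2
    have h2 : colLen q w + (if w = jc then 1 else 0) = colLen p w := by
      have := hC w
      rw [if_neg (by omega : w ≠ w + 1)] at this
      rcases eq_or_ne w jc with rfl | hw
      · rw [if_pos rfl] at this ⊢; omega
      · rw [if_neg hw] at this ⊢; omega
    have := hCqanti w
    have := hCpanti w
    split_ifs at h2 ⊢ <;> omega
  have hb : ja = 0 ∨ ja ∈ p.parts.erase (jc + 1) := by
    rcases Nat.eq_zero_or_pos ja with h0 | hpos
    · exact Or.inl h0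
    · right
      have := hbcount hpos
      rcases eq_or_ne ja (jc + 1) with he | hne
      · apply Multiset.count_pos.mp
        rw [he, Multiset.count_erase_self]
        rw [if_pos he, he] at this
        omega
      · apply Multiset.count_pos.mp
        rw [Multiset.count_erase_of_ne hne]
        omega
  refine ⟨jc + 1, ha, ja, hb, ?_⟩
  set E := (p.parts.erase (jc + 1)).erase ja with hE
  have hE0 : ja = 0 → E = p.parts.erase (jc + 1) := by
    intro h0
    rw [hE, h0]
    apply Multiset.erase_of_notMem
    intro hc
    have := p.parts_pos (Multiset.mem_of_mem_erase hc)
    omega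
  apply Multiset.ext.mpr
  intro v
  have B1 : ∀ u, (p.parts.erase (jc + 1)).count u + (if u = jc + 1 then 1 else 0)
      = p.parts.count u := by
    intro u
    conv_rhs => rw [← Multiset.cons_erase ha]
    rw [Multiset.count_cons]
  have B2 : ∀ u, E.count u + (if u = ja ∧ 0 < ja then 1 else 0)
      = (p.parts.erase (jc + 1)).count u := by
    intro u
    rcases Nat.eq_zero_or_pos ja with h0 | hpos
    · rw [hE0 h0]
      simp [h0]
    · rcases hb with h0 | hbm
      · exact absurd h0 (by omega)
      · conv_rhs => rw [← Multiset.cons_erase hbm]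
        rw [Multiset.count_cons, ← hE]
        split_ifs <;> omega
  have RHS : ((ja + 1) ::ₘ if jc + 1 = 1 then E else (jc + 1 - 1) ::ₘ E).count v
      = E.count v + (if v = ja + 1 then 1 else 0)
        + (if v = jc ∧ 0 < jc then 1 else 0) := by
    rcases eq_or_ne jc 0 with rfl | hjc
    · rw [if_pos rfl, Multiset.count_cons]
      split_ifs <;> omega
    · rw [if_neg (by omega), Multiset.count_cons, Multiset.count_cons,
        show jc + 1 - 1 = jc by omega]
      split_ifs <;> omega
  rw [RHS]
  rcases Nat.eq_zero_or_pos v with rfl | hv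
  · have hq0 := count_zero_parts q
    have hp0 := count_zero_parts p
    have hEle : E.count 0 ≤ p.parts.count 0 :=
      Multiset.count_le_of_le 0 (le_trans (Multiset.erase_le _ _) (Multiset.erase_le _ _))
    rw [if_neg (show ¬(0 : ℕ) = ja + 1 by omega),
      if_neg (show ¬((0 : ℕ) = jc ∧ 0 < jc) by omega), hq0]
    omega
  · obtain ⟨w, rfl⟩ : ∃ w, v = w + 1 := ⟨v - 1, by omega⟩
    have A1 := countP_split p.parts w
    have A2 := countP_split q.parts w
    have A3 := hC w
    have A4 := hC (w + 1)
    have b1 := B1 (w + 1)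
    have b2 := B2 (w + 1)
    rw [show p.parts.countP (fun x => w < x) = colLen p w from rfl] at A1
    rw [show q.parts.countP (fun x => w < x) = colLen q w from rfl] at A2
    rw [show p.parts.countP (fun x => w + 1 < x) = colLen p (w + 1) from rfl] at A1
    rw [show q.parts.countP (fun x => w + 1 < x) = colLen q (w + 1) from rfl] at A2
    have hc1' := hc1
    split_ifs at A3 A4 b1 b2 ⊢ <;> omega

lemma adj_iff_move {n : ℕ} (p q : Nat.Partition n) :
    (partitionGraph n).Adj p q ↔ ∃ jc ja, MoveEq p q jc ja := by
  constructor
  · rintro ⟨hne, ht | ht⟩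
    · exact transfer_move ht hne
    · obtain ⟨jc, ja, hm⟩ := transfer_move ht (Ne.symm hne)
      exact ⟨ja, jc, hm.symm⟩
  · rintro ⟨jc, ja, hm⟩
    exact ⟨moveEq_ne hm, Or.inl (move_transfer hm)⟩

/-! ### Basic facts about `partFun` -/

lemma partFun_succ_le {n : ℕ} (p : Nat.Partition n) (i : ℕ) :
    partFun p (i + 1) ≤ partFun p i := by
  by_contra hlt
  push_neg at hlt
  have h1 := (partFun_lt_iff p (i + 1) (partFun p i)).mp hlt
  have h2 : ¬ partFun p i < partFun p i := lt_irrefl _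
  rw [partFun_lt_iff p i (partFun p i)] at h2
  omega

lemma partFun_anti {n : ℕ} (p : Nat.Partition n) : Antitone (partFun p) :=
  antitone_nat_of_succ_le (partFun_succ_le p)

lemma partFun_pos_lt {n : ℕ} (p : Nat.Partition n) {i : ℕ} (h : 0 < partFun p i) : i < n := by
  have := (partFun_lt_iff p i 0).mp h
  have := colLen_le p 0
  omega

lemma partFun_le {n : ℕ} (p : Nat.Partition n) (i : ℕ) : partFun p i ≤ n := by
  by_contra h
  push_neg at h
  have := (partFun_lt_iff p i n).mp h
  rw [colLen_eq_zero p le_rfl] at this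
  omega

lemma sum_getD_eq_sum : ∀ (L : List ℕ) (N : ℕ), L.length ≤ N →
    (∑ r ∈ Finset.range N, L.getD r 0) = L.sum
  | [], N, _ => by simp
  | x :: t, N, h => by
      have hN : ∃ N', N = N' + 1 := ⟨N - 1, by simp at h; omega⟩
      obtain ⟨N', rfl⟩ := hN
      rw [Finset.sum_range_succ']
      simp only [List.getD_cons_succ, List.getD_cons_zero]
      rw [sum_getD_eq_sum t N' (by simp at h ⊢; omega), List.sum_cons]
      omega

lemma sum_partFun {n : ℕ} (p : Nat.Partition n) {N : ℕ} (hN : n ≤ N) :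
    (∑ r ∈ Finset.range N, partFun p r) = n := by
  have hlen : ((p.parts.sort (· ≤ ·)).reverse).length ≤ N := by
    rw [List.length_reverse, Multiset.length_sort]
    exact le_trans (card_parts_le p) hN
  rw [show (fun r => partFun p r) = fun r => ((p.parts.sort (· ≤ ·)).reverse).getD r 0 from rfl]
  rw [sum_getD_eq_sum _ N hlen, List.sum_reverse, ← Multiset.sum_coe, Multiset.sort_eq,
    p.parts_sum]

lemma rowcount {n : ℕ} (p : Nat.Partition n) {N : ℕ} (hN : n ≤ N) (j : ℕ) :
    ((Finset.range N).filter (fun r => j < partFun p r)).card = colLen p j := by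
  have hset : (Finset.range N).filter (fun r => j < partFun p r) = Finset.range (colLen p j) := by
    ext r
    simp only [Finset.mem_filter, Finset.mem_range]
    rw [partFun_lt_iff]
    have := colLen_le p j
    constructor
    · rintro ⟨-, h2⟩; exact h2
    · intro h; exact ⟨by omega, h⟩
  rw [hset, Finset.card_range]

/-! ### transferFun evaluation -/

lemma tf_at_j (f : ℕ → ℕ) (i j : ℕ) : transferFun f i j j = f j + 1 := by
  rw [transferFun, Function.update_self]

lemma tf_at_i (f : ℕ → ℕ) {i j : ℕ} (h : i ≠ j) : transferFun f i j i = f i - 1 := by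
  rw [transferFun, Function.update_of_ne h, Function.update_self]

lemma tf_other (f : ℕ → ℕ) {i j k : ℕ} (hki : k ≠ i) (hkj : k ≠ j) :
    transferFun f i j k = f k := by
  rw [transferFun, Function.update_of_ne hkj, Function.update_of_ne hki]

/-! ### Distinctness of corner rows -/

lemma addable_inj {n : ℕ} (p : Nat.Partition n) {j j' : ℕ}
    (hj : HasAddableCorner (partFun p) j) (hj' : HasAddableCorner (partFun p) j')
    (hlt : j < j') : partFun p j' < partFun p j := by
  rcases hj' with h0 | h0
  · omega
  · calc partFun p j' < partFun p (j' - 1) := h0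
      _ ≤ partFun p j := partFun_anti p (by omega)

lemma removable_inj {n : ℕ} (p : Nat.Partition n) {i i' : ℕ}
    (hi : HasRemovableCorner (partFun p) i) (hi' : HasRemovableCorner (partFun p) i')
    (hlt : i < i') : partFun p i' < partFun p i :=
  lt_of_le_of_lt (partFun_anti p (by omega : i + 1 ≤ i')) hi

lemma removable_pos {n : ℕ} (p : Nat.Partition n) {i : ℕ}
    (hi : HasRemovableCorner (partFun p) i) : 0 < partFun p i := by
  have := hi; rw [HasRemovableCorner] at this; omega

lemma removable_lt_n {n : ℕ} (p : Nat.Partition n) {i : ℕ}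
    (hi : HasRemovableCorner (partFun p) i) : i < n :=
  partFun_pos_lt p (removable_pos p hi)

lemma addable_le_n {n : ℕ} (p : Nat.Partition n) {j : ℕ}
    (hj : HasAddableCorner (partFun p) j) : j ≤ n := by
  rcases hj with h0 | h0
  · omega
  · have h1 : 0 < partFun p (j - 1) := by omega
    have := partFun_pos_lt p h1
    omega

/-! ### From an admissible transfer to a move -/

lemma adm_cols_ne {n : ℕ} (p : Nat.Partition n) {i j : ℕ}
    (h : AdmissibleTransfer (partFun p) i j) : partFun p i - 1 ≠ partFun p j := by
  obtain ⟨hrem, hadd, hij, htf⟩ := h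
  set f := partFun p with hf
  have hfi : 0 < f i := removable_pos p hrem
  intro heq
  rcases lt_trichotomy j i with hlt | rfl | hlt
  · have : f i ≤ f j := partFun_anti p (by omega)
    omega
  · omega
  · -- j > i : forces j = i + 1 and f (i+1) = f i - 1, contradicting monotonicity of transfer
    have hji : f j ≤ f (i + 1) := partFun_anti p (by omega)
    have hi1 : f (i + 1) < f i := hrem
    have hj1 : j = i + 1 := by
      by_contra hne
      rcases hadd with h0 | h0
      · omega
      · have : f (j - 1) ≤ f (i + 1) := partFun_anti p (by omega)
        omega
    subst hj1
    have h1 := htf i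
    rw [tf_at_j, tf_at_i _ hij] at h1
    omega

lemma adm_to_move {n : ℕ} (p : Nat.Partition n) {i j : ℕ}
    (h : AdmissibleTransfer (partFun p) i j) :
    ∃ q : Nat.Partition n, MoveEq p q (partFun p i - 1) (partFun p j) := by
  obtain ⟨hrem, hadd, hij, htf⟩ := h
  set f := partFun p with hf
  set f' := transferFun f i j with hf'
  have hfi : 0 < f i := removable_pos p hrem
  have hiN : i < n + 1 := by have := removable_lt_n p hrem; omega
  have hjN : j < n + 1 := by have := addable_le_n p hadd; omega
  have hf'i : f' i = f i - 1 := tf_at_i f hij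
  have hf'j : f' j = f j + 1 := tf_at_j f i j
  -- the parts of the new partition
  set parts' : Multiset ℕ :=
    Multiset.filter (fun x => 0 < x) ((Multiset.range (n + 1)).map f') with hparts'
  have hj_mem : j ∈ (Finset.range (n + 1)).erase i :=
    Finset.mem_erase.mpr ⟨Ne.symm hij, Finset.mem_range.mpr hjN⟩
  have hpeel : ∀ g : ℕ → ℕ, ∑ r ∈ Finset.range (n + 1), g r
      = (∑ r ∈ ((Finset.range (n + 1)).erase i).erase j, g r) + g j + g i := by
    intro g
    rw [← Finset.sum_erase_add _ _ (Finset.mem_range.mpr hiN), ← Finset.sum_erase_add _ _ hj_mem]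
  have hcountP : ∀ j' : ℕ, parts'.countP (fun x => j' < x)
      = ((Finset.range (n + 1)).filter (fun r => j' < f' r)).card := by
    intro j'
    rw [hparts', Multiset.countP_filter, Multiset.countP_map]
    have : ∀ x : Multiset ℕ, Multiset.card x = Multiset.card x := fun _ => rfl
    rw [show (Finset.range (n + 1)).filter (fun r => j' < f' r)
        = ⟨(Multiset.range (n + 1)).filter (fun r => j' < f' r),
            Multiset.Nodup.filter _ (Multiset.nodup_range _)⟩ from rfl]
    rw [Finset.card_mk]
    congr 1
    apply Multiset.filter_congr
    intro r _
    constructor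
    · rintro ⟨h1, _⟩; exact h1
    · intro h1; exact ⟨h1, by omega⟩
  have hsum' : parts'.sum = n := by
    have hsplit := Multiset.filter_add_not (fun x => 0 < x) ((Multiset.range (n + 1)).map f')
    have hzero : (Multiset.filter (fun x => ¬ 0 < x) ((Multiset.range (n + 1)).map f')).sum
        = 0 := by
      apply Multiset.sum_eq_zero
      intro x hx
      have := Multiset.of_mem_filter hx
      omega
    have htot : ((Multiset.range (n + 1)).map f').sum = ∑ r ∈ Finset.range (n + 1), f' r := by
      rw [← Finset.range_val, ← Finset.sum]
    have hsum_f : ∑ r ∈ Finset.range (n + 1), f r = n := sum_partFun p (by omega)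
    have hcongr : ∑ r ∈ ((Finset.range (n + 1)).erase i).erase j, f' r
        = ∑ r ∈ ((Finset.range (n + 1)).erase i).erase j, f r := by
      apply Finset.sum_congr rfl
      intro r hr
      have hrj : r ≠ j := (Finset.mem_erase.mp hr).1
      have hri : r ≠ i := (Finset.mem_erase.mp (Finset.mem_erase.mp hr).2).1
      exact tf_other f hri hrj
    have e1 := hpeel f'
    have e2 := hpeel f
    have hsum_f' : ∑ r ∈ Finset.range (n + 1), f' r = n := by
      rw [e1, hcongr, hf'i, hf'j]
      omega
    calc parts'.sum = parts'.sum + 0 := by omega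
      _ = ((Multiset.range (n + 1)).map f').sum := by
          rw [← hzero, hparts']
          conv_rhs => rw [← hsplit]
          rw [Multiset.sum_add]
      _ = n := by rw [htot, hsum_f']
  refine ⟨⟨parts', fun hx => (Multiset.of_mem_filter hx), hsum'⟩, adm_cols_ne p ⟨hrem, hadd, hij, htf⟩, ?_⟩
  intro j'
  show parts'.countP (fun x => j' < x) + _ = _
  rw [hcountP j']
  have hrow := rowcount p (show n ≤ n + 1 by omega) j'
  rw [← hrow, Finset.card_filter, Finset.card_filter,
    hpeel (fun r => if j' < f' r then 1 else 0), hpeel (fun r => if j' < f r then 1 else 0)]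
  have hcg : (∑ r ∈ ((Finset.range (n + 1)).erase i).erase j, if j' < f' r then 1 else 0)
      = ∑ r ∈ ((Finset.range (n + 1)).erase i).erase j, if j' < f r then 1 else 0 := by
    apply Finset.sum_congr rfl
    intro r hr
    have hrj : r ≠ j := (Finset.mem_erase.mp hr).1
    have hri : r ≠ i := (Finset.mem_erase.mp (Finset.mem_erase.mp hr).2).1
    rw [hf', tf_other f hri hrj]
  rw [hcg, hf'i, hf'j]
  split_ifs <;> omega

/-! ### From a move to an admissible transfer -/

lemma move_to_adm {n : ℕ} {p q : Nat.Partition n} {jc ja : ℕ} (h : MoveEq p q jc ja) :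
    AdmissibleTransfer (partFun p) (colLen p jc - 1) (colLen p ja) ∧
      partFun p (colLen p jc - 1) = jc + 1 ∧ partFun p (colLen p ja) = ja := by
  obtain ⟨hc1, hc2, hc3⟩ := moveEq_colLen h
  have hjcja : jc ≠ ja := h.1
  set i := colLen p jc - 1 with hidef
  set j := colLen p ja with hjdef
  have hCq := colLen_succ_le q
  have hCp := colLen_succ_le p
  have hCpjc : 1 ≤ colLen p jc := by omega
  have hstep1 : colLen p (jc + 1) + 1 + (if ja = jc + 1 then 1 else 0) ≤ colLen p jc := by
    rcases eq_or_ne (jc + 1) ja with he | hne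
    · rw [if_pos he.symm]
      have h1 : colLen q (jc + 1) = colLen p (jc + 1) + 1 := he ▸ hc2
      have := hCq jc
      omega
    · rw [if_neg (Ne.symm hne)]
      have h1 : colLen q (jc + 1) = colLen p (jc + 1) := hc3 _ (by omega) hne
      have := hCq jc
      omega
  have Fi : partFun p i = jc + 1 := by
    have h1 : jc < partFun p i := (partFun_lt_iff p i jc).mpr (by omega)
    have h2 : ¬ (jc + 1 < partFun p i) := fun hcon => by
      have := (partFun_lt_iff p i (jc + 1)).mp hcon
      split_ifs at hstep1 <;> omega
    omega
  have hrem : HasRemovableCorner (partFun p) i := by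
    have h1 : ¬ (jc < partFun p (i + 1)) := fun hcon => by
      have := (partFun_lt_iff p (i + 1) jc).mp hcon
      omega
    rw [HasRemovableCorner]
    omega
  have hja_step : 0 < ja →
      colLen p ja + 1 + (if ja - 1 = jc then 1 else 0) ≤ colLen p (ja - 1) := by
    intro hpos
    have hsucc : ja - 1 + 1 = ja := by omega
    have hq1 : colLen q ja ≤ colLen q (ja - 1) := by
      have := hCq (ja - 1); rw [hsucc] at this; exact this
    rcases eq_or_ne (ja - 1) jc with he | hne
    · rw [if_pos he]
      have h1 : colLen q (ja - 1) + 1 = colLen p (ja - 1) := he ▸ hc1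
      omega
    · rw [if_neg hne]
      have h1 : colLen q (ja - 1) = colLen p (ja - 1) := hc3 _ hne (by omega)
      omega
  have Fj : partFun p j = ja := by
    have h1 : ¬ (ja < partFun p j) := fun hcon => by
      have := (partFun_lt_iff p j ja).mp hcon
      omega
    rcases Nat.eq_zero_or_pos ja with h0 | hpos
    · omega
    · have h2 : ja - 1 < partFun p j := by
        apply (partFun_lt_iff p j (ja - 1)).mpr
        have := hja_step hpos
        split_ifs at this <;> omega
      omega
  have hadd : HasAddableCorner (partFun p) j := by
    rcases Nat.eq_zero_or_pos j with h0 | hpos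
    · exact Or.inl h0
    · right
      have h1 : ja < partFun p (j - 1) := by
        apply (partFun_lt_iff p (j - 1) ja).mpr
        omega
      omega
  have hadd2 : 0 < j → ja + 1 ≤ partFun p (j - 1) := by
    intro hpos
    have h1 : ja < partFun p (j - 1) := (partFun_lt_iff p (j - 1) ja).mpr (by omega)
    omega
  have hij : i ≠ j := by
    intro he
    have : partFun p i = partFun p j := by rw [he]
    rw [Fi, Fj] at this
    rw [← this] at hstep1
    rw [if_pos rfl] at hstep1
    have : j ≤ colLen p (jc + 1) := by rw [hjdef, this]
    omega
  refine ⟨⟨hrem, hadd, hij, ?_⟩, Fi, Fj⟩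
  intro k
  have hanti := partFun_succ_le p
  rcases eq_or_ne k i with rfl | hki
  · rw [tf_at_i (partFun p) hij]
    rcases eq_or_ne (i + 1) j with he | hne
    · rw [he, tf_at_j]
      have h1 : partFun p (i + 1) < partFun p i := hrem
      rw [he] at h1
      omega
    · rw [tf_other (partFun p) (by omega) hne]
      have h1 : partFun p (i + 1) < partFun p i := hrem
      omega
  · rcases eq_or_ne k j with rfl | hkj
    · rw [tf_at_j]
      rcases eq_or_ne (j + 1) i with he | hne
      · rw [he, tf_at_i (partFun p) hij]
        have h1 := hanti j
        rw [he] at h1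
        omega
      · rw [tf_other (partFun p) hne (by omega)]
        have := hanti j
        omega
    · rw [tf_other (partFun p) hki hkj]
      rcases eq_or_ne (k + 1) i with he | hne_i
      · rw [he, tf_at_i (partFun p) hij]
        have h1 := hanti k
        rw [he] at h1
        omega
      · rcases eq_or_ne (k + 1) j with hej | hne_j
        · rw [hej, tf_at_j]
          have h1 := hadd2 (by omega)
          have h2 : j - 1 = k := by omega
          rw [h2] at h1
          rw [Fj]
          omega
        · rw [tf_other (partFun p) hne_i hne_j]
          exact hanti k


/-! ### Counting lemmas -/

lemma adm_finite_j {n : ℕ} (p : Nat.Partition n) (i : ℕ) :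
    {j | AdmissibleTransfer (partFun p) i j}.Finite := by
  apply Set.Finite.subset (Set.finite_Iio (n + 1))
  intro j hj
  have := addable_le_n p hj.2.1
  simp only [Set.mem_Iio]
  omega

lemma adm_finite_i {n : ℕ} (p : Nat.Partition n) (j : ℕ) :
    {i | AdmissibleTransfer (partFun p) i j}.Finite := by
  apply Set.Finite.subset (Set.finite_Iio (n + 1))
  intro i hi
  have := removable_lt_n p hi.1
  simp only [Set.mem_Iio]
  omega

lemma ncard_le_sCap {n : ℕ} (p : Nat.Partition n) {i : ℕ} (hi : i ≤ n) :
    Set.ncard {j | AdmissibleTransfer (partFun p) i j} ≤ sCap p :=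
  Finset.le_sup (f := fun i => Set.ncard {j | AdmissibleTransfer (partFun p) i j})
    (Finset.mem_range.mpr (by omega))

lemma ncard_le_tCap {n : ℕ} (p : Nat.Partition n) {j : ℕ} (hj : j ≤ n) :
    Set.ncard {i | AdmissibleTransfer (partFun p) i j} ≤ tCap p :=
  Finset.le_sup (f := fun j => Set.ncard {i | AdmissibleTransfer (partFun p) i j})
    (Finset.mem_range.mpr (by omega))

lemma moveEq_unique {n : ℕ} {p q q' : Nat.Partition n} {jc ja : ℕ}
    (h : MoveEq p q jc ja) (h' : MoveEq p q' jc ja) : q = q' :=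
  colLen_inj fun x => by
    have h1 := h.2 x
    have h2 := h'.2 x
    omega

lemma share_col {n : ℕ} {p q q' : Nat.Partition n} {jc ja jc' ja' : ℕ}
    (h : MoveEq p q jc ja) (h' : MoveEq p q' jc' ja')
    (hadj : (partitionGraph n).Adj q q') : jc = jc' ∨ ja = ja' := by
  obtain ⟨u, v, huv⟩ := (adj_iff_move q q').mp hadj
  by_contra hboth
  push_neg at hboth
  obtain ⟨hcc, haa⟩ := hboth
  have hne1 : jc ≠ ja := h.1
  have hne2 : jc' ≠ ja' := h'.1
  have hneuv : u ≠ v := huv.1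
  have e1 := h.2 jc
  have e2 := h'.2 jc
  have e3 := huv.2 jc
  have e4 := h.2 ja'
  have e5 := h'.2 ja'
  have e6 := huv.2 ja'
  rw [if_pos rfl, if_neg hne1] at e1
  rw [if_neg (by omega : jc ≠ jc')] at e2
  rw [if_pos rfl] at e5
  rw [if_neg (by omega : ja' ≠ ja)] at e4
  rw [if_neg (by omega : ja' ≠ jc')] at e5
  split_ifs at e2 e3 e4 e6 <;> omega

/-! ### Upper bound -/

lemma clique_le {n : ℕ} (p : Nat.Partition n) {k : ℕ} {s : Finset (Nat.Partition n)}
    (hs : (partitionGraph n).IsNClique k s) (hp : p ∈ s) :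
    k ≤ max (sCap p) (tCap p) + 1 := by
  obtain ⟨hclique, hcard⟩ := hs
  set t := s.erase p with ht
  have hk1 : 1 ≤ k := by
    rw [← hcard]
    exact Finset.card_pos.mpr ⟨p, hp⟩
  have hcardt : t.card = k - 1 := by
    rw [ht, Finset.card_erase_of_mem hp, hcard]
  have hmem_s : ∀ q ∈ t, q ∈ s := fun q hq => Finset.mem_of_mem_erase hq
  have hadjall : ∀ q ∈ t, (partitionGraph n).Adj p q := by
    intro q hq
    exact hclique hp (hmem_s q hq) (Ne.symm (Finset.ne_of_mem_erase hq))
  have hmv : ∀ q, q ∈ t → ∃ jc ja, MoveEq p q jc ja := by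
    intro q hq
    exact (adj_iff_move p q).mp (hadjall q hq)
  choose jc ja hm using hmv
  rcases Finset.eq_empty_or_nonempty t with he | ⟨q0, hq0⟩
  · rw [he] at hcardt
    simp at hcardt
    omega
  · have hshare : ∀ q (hq : q ∈ t) q' (hq' : q' ∈ t), q ≠ q' →
        jc q hq = jc q' hq' ∨ ja q hq = ja q' hq' := by
      intro q hq q' hq' hne
      exact share_col (hm q hq) (hm q' hq')
        (hclique (hmem_s q hq) (hmem_s q' hq') hne)
    have hdich : (∀ q (hq : q ∈ t), jc q hq = jc q0 hq0) ∨
        (∀ q (hq : q ∈ t), ja q hq = ja q0 hq0) := by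
      by_cases hall : ∀ q (hq : q ∈ t), jc q hq = jc q0 hq0
      · exact Or.inl hall
      · right
        push_neg at hall
        obtain ⟨q1, hq1, hjc1⟩ := hall
        have hne10 : q1 ≠ q0 := fun he => hjc1 (by subst he; rfl)
        have hja10 : ja q1 hq1 = ja q0 hq0 := by
          rcases hshare q1 hq1 q0 hq0 hne10 with h | h
          · exact absurd h hjc1
          · exact h
        intro q hq
        rcases eq_or_ne q q0 with rfl | hneq0
        · rfl
        rcases eq_or_ne q q1 with rfl | hneq1
        · exact hja10
        rcases hshare q hq q0 hq0 hneq0 with h | h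
        · rcases hshare q hq q1 hq1 hneq1 with h' | h'
          · exact absurd (h'.symm.trans h) hjc1
          · exact h'.trans hja10
        · exact h
    have hkey : k - 1 ≤ max (sCap p) (tCap p) := by
      rcases hdich with hall | hall
      · -- all moves share the source column `jc q0`
        set jc0 := jc q0 hq0 with hjc0
        set i := colLen p jc0 - 1 with hi
        have hmv0 : ∀ q (hq : q ∈ t), MoveEq p q jc0 (ja q hq) := by
          intro q hq
          have := hm q hq
          rwa [hall q hq] at this
        have hadm : ∀ q (hq : q ∈ t),
            AdmissibleTransfer (partFun p) i (colLen p (ja q hq)) ∧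
              partFun p (colLen p (ja q hq)) = ja q hq := by
          intro q hq
          obtain ⟨h1, _, h3⟩ := move_to_adm (hmv0 q hq)
          exact ⟨h1, h3⟩
        have hin : i ≤ n := by
          have := colLen_le p jc0
          omega
        have hcardle : t.card ≤ ((adm_finite_j p i).toFinset).card := by
          rw [← Finset.card_attach (s := t)]
          apply Finset.card_le_card_of_injOn (fun x => colLen p (ja x.1 x.2))
          · intro x _
            rw [Finset.mem_coe, Set.Finite.mem_toFinset]
            exact (hadm x.1 x.2).1
          · intro x _ y _ hxy
            have hx := (hadm x.1 x.2).2
            have hy := (hadm y.1 y.2).2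
            simp only at hxy
            have hja : ja x.1 x.2 = ja y.1 y.2 := by
              rw [← hx, ← hy, hxy]
            have : x.1 = y.1 := moveEq_unique (hmv0 x.1 x.2) (hja ▸ hmv0 y.1 y.2)
            exact Subtype.ext this
        have := ncard_le_sCap p hin
        rw [Set.ncard_eq_toFinset_card _ (adm_finite_j p i)] at this
        omega
      · -- all moves share the target column `ja q0`
        set ja0 := ja q0 hq0 with hja0
        set j := colLen p ja0 with hj
        have hmv0 : ∀ q (hq : q ∈ t), MoveEq p q (jc q hq) ja0 := by
          intro q hq
          have := hm q hq
          rwa [hall q hq] at this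
        have hadm : ∀ q (hq : q ∈ t),
            AdmissibleTransfer (partFun p) (colLen p (jc q hq) - 1) j ∧
              partFun p (colLen p (jc q hq) - 1) = jc q hq + 1 := by
          intro q hq
          obtain ⟨h1, h2, _⟩ := move_to_adm (hmv0 q hq)
          exact ⟨h1, h2⟩
        have hjn : j ≤ n := by
          have := colLen_le p ja0
          omega
        have hcardle : t.card ≤ ((adm_finite_i p j).toFinset).card := by
          rw [← Finset.card_attach (s := t)]
          apply Finset.card_le_card_of_injOn (fun x => colLen p (jc x.1 x.2) - 1)
          · intro x _
            rw [Finset.mem_coe, Set.Finite.mem_toFinset]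
            exact (hadm x.1 x.2).1
          · intro x _ y _ hxy
            have hx := (hadm x.1 x.2).2
            have hy := (hadm y.1 y.2).2
            simp only at hxy
            have hja : jc x.1 x.2 = jc y.1 y.2 := by
              have : partFun p (colLen p (jc x.1 x.2) - 1)
                  = partFun p (colLen p (jc y.1 y.2) - 1) := by rw [hxy]
              omega
            have : x.1 = y.1 := moveEq_unique (hmv0 x.1 x.2) (hja ▸ hmv0 y.1 y.2)
            exact Subtype.ext this
        have := ncard_le_tCap p hjn
        rw [Set.ncard_eq_toFinset_card _ (adm_finite_i p j)] at this
        omega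
    omega

/-! ### Lower bound: explicit cliques -/

lemma addable_f_ne {n : ℕ} (p : Nat.Partition n) {j j' : ℕ}
    (hj : HasAddableCorner (partFun p) j) (hj' : HasAddableCorner (partFun p) j')
    (hne : j ≠ j') : partFun p j ≠ partFun p j' := by
  rcases lt_trichotomy j j' with h | h | h
  · have := addable_inj p hj hj' h; omega
  · omega
  · have := addable_inj p hj' hj h; omega

lemma removable_f_ne {n : ℕ} (p : Nat.Partition n) {i i' : ℕ}
    (hi : HasRemovableCorner (partFun p) i) (hi' : HasRemovableCorner (partFun p) i')
    (hne : i ≠ i') : partFun p i ≠ partFun p i' := by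
  rcases lt_trichotomy i i' with h | h | h
  · have := removable_inj p hi hi' h; omega
  · omega
  · have := removable_inj p hi' hi h; omega

lemma exists_clique_of_adm_j {n : ℕ} (p : Nat.Partition n) (i0 : ℕ) :
    ∃ s : Finset (Nat.Partition n),
      (partitionGraph n).IsNClique
        (Set.ncard {j | AdmissibleTransfer (partFun p) i0 j} + 1) s ∧ p ∈ s := by
  set S := (adm_finite_j p i0).toFinset with hS
  have hadm : ∀ j, j ∈ S → AdmissibleTransfer (partFun p) i0 j := by
    intro j hj
    rw [hS, Set.Finite.mem_toFinset] at hj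
    exact hj
  have hmv : ∀ j, j ∈ S → ∃ q, MoveEq p q (partFun p i0 - 1) (partFun p j) := by
    intro j hj
    exact adm_to_move p (hadm j hj)
  choose Q hQ using hmv
  have hfne : ∀ (x y : {x // x ∈ S}), x ≠ y → partFun p x.1 ≠ partFun p y.1 := by
    intro x y hxy
    exact addable_f_ne p (hadm x.1 x.2).2.1 (hadm y.1 y.2).2.1
      (fun h => hxy (Subtype.ext h))
  have hQinj : Function.Injective (fun x : {x // x ∈ S} => Q x.1 x.2) := by
    intro x y heq
    by_contra hxy
    have hfne' := hfne x y hxy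
    have h1 := (moveEq_colLen (hQ x.1 x.2)).2.1
    have h2 := (moveEq_colLen (hQ y.1 y.2)).2.2 (partFun p x.1)
      (Ne.symm (hQ x.1 x.2).1) hfne'
    simp only at heq
    rw [heq] at h1
    omega
  refine ⟨insert p (S.attach.image (fun x => Q x.1 x.2)), ⟨?_, ?_⟩, Finset.mem_insert_self _ _⟩
  · -- clique
    intro a ha b hb hab
    simp only [Finset.coe_insert, Set.mem_insert_iff, Finset.coe_image, Set.mem_image,
      Finset.mem_coe, Finset.mem_attach] at ha hb
    have hadj_pQ : ∀ (x : {x // x ∈ S}), (partitionGraph n).Adj p (Q x.1 x.2) := by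
      intro x
      exact (adj_iff_move p _).mpr ⟨_, _, hQ x.1 x.2⟩
    have hadj_QQ : ∀ (x y : {x // x ∈ S}), Q x.1 x.2 ≠ Q y.1 y.2 →
        (partitionGraph n).Adj (Q x.1 x.2) (Q y.1 y.2) := by
      intro x y hne
      have hxy : x ≠ y := fun h => hne (by rw [h])
      apply (adj_iff_move _ _).mpr
      refine ⟨partFun p x.1, partFun p y.1, hfne x y hxy, ?_⟩
      intro u
      have h1 := (hQ x.1 x.2).2 u
      have h2 := (hQ y.1 y.2).2 u
      omega
    rcases ha with rfl | ⟨x, -, rfl⟩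
    · rcases hb with rfl | ⟨y, -, rfl⟩
      · exact absurd rfl hab
      · exact hadj_pQ y
    · rcases hb with rfl | ⟨y, -, rfl⟩
      · exact (hadj_pQ x).symm
      · exact hadj_QQ x y hab
  · -- cardinality
    have hpnot : p ∉ S.attach.image (fun x => Q x.1 x.2) := by
      intro hmem
      obtain ⟨x, -, hx⟩ := Finset.mem_image.mp hmem
      exact moveEq_ne (hQ x.1 x.2) hx.symm
    rw [Finset.card_insert_of_notMem hpnot,
      Finset.card_image_of_injective _ hQinj, Finset.card_attach,
      ← Set.ncard_eq_toFinset_card _ (adm_finite_j p i0)]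

lemma exists_clique_of_adm_i {n : ℕ} (p : Nat.Partition n) (j0 : ℕ) :
    ∃ s : Finset (Nat.Partition n),
      (partitionGraph n).IsNClique
        (Set.ncard {i | AdmissibleTransfer (partFun p) i j0} + 1) s ∧ p ∈ s := by
  set S := (adm_finite_i p j0).toFinset with hS
  have hadm : ∀ i, i ∈ S → AdmissibleTransfer (partFun p) i j0 := by
    intro i hi
    rw [hS, Set.Finite.mem_toFinset] at hi
    exact hi
  have hmv : ∀ i, i ∈ S → ∃ q, MoveEq p q (partFun p i - 1) (partFun p j0) := by
    intro i hi
    exact adm_to_move p (hadm i hi)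
  choose Q hQ using hmv
  have hfne : ∀ (x y : {x // x ∈ S}), x ≠ y →
      partFun p x.1 - 1 ≠ partFun p y.1 - 1 := by
    intro x y hxy
    have h1 := removable_f_ne p (hadm x.1 x.2).1 (hadm y.1 y.2).1 (fun h => hxy (Subtype.ext h))
    have h2 := removable_pos p (hadm x.1 x.2).1
    have h3 := removable_pos p (hadm y.1 y.2).1
    omega
  have hQinj : Function.Injective (fun x : {x // x ∈ S} => Q x.1 x.2) := by
    intro x y heq
    by_contra hxy
    have hfne' := hfne x y hxy
    have h1 := (moveEq_colLen (hQ x.1 x.2)).1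
    have h2 := (moveEq_colLen (hQ y.1 y.2)).2.2 (partFun p x.1 - 1)
      hfne' (hQ x.1 x.2).1
    simp only at heq
    rw [heq] at h1
    omega
  refine ⟨insert p (S.attach.image (fun x => Q x.1 x.2)), ⟨?_, ?_⟩, Finset.mem_insert_self _ _⟩
  · intro a ha b hb hab
    simp only [Finset.coe_insert, Set.mem_insert_iff, Finset.coe_image, Set.mem_image,
      Finset.mem_coe, Finset.mem_attach] at ha hb
    have hadj_pQ : ∀ (x : {x // x ∈ S}), (partitionGraph n).Adj p (Q x.1 x.2) := by
      intro x
      exact (adj_iff_move p _).mpr ⟨_, _, hQ x.1 x.2⟩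
    have hadj_QQ : ∀ (x y : {x // x ∈ S}), Q x.1 x.2 ≠ Q y.1 y.2 →
        (partitionGraph n).Adj (Q x.1 x.2) (Q y.1 y.2) := by
      intro x y hne
      have hxy : x ≠ y := fun h => hne (by rw [h])
      apply (adj_iff_move _ _).mpr
      refine ⟨partFun p y.1 - 1, partFun p x.1 - 1, Ne.symm (hfne x y hxy), ?_⟩
      intro u
      have h1 := (hQ x.1 x.2).2 u
      have h2 := (hQ y.1 y.2).2 u
      omega
    rcases ha with rfl | ⟨x, -, rfl⟩
    · rcases hb with rfl | ⟨y, -, rfl⟩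
      · exact absurd rfl hab
      · exact hadj_pQ y
    · rcases hb with rfl | ⟨y, -, rfl⟩
      · exact (hadj_pQ x).symm
      · exact hadj_QQ x y hab
  · have hpnot : p ∉ S.attach.image (fun x => Q x.1 x.2) := by
      intro hmem
      obtain ⟨x, -, hx⟩ := Finset.mem_image.mp hmem
      exact moveEq_ne (hQ x.1 x.2) hx.symm
    rw [Finset.card_insert_of_notMem hpnot,
      Finset.card_image_of_injective _ hQinj, Finset.card_attach,
      ← Set.ncard_eq_toFinset_card _ (adm_finite_i p j0)]

lemma exists_clique {n : ℕ} (p : Nat.Partition n) :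
    ∃ s : Finset (Nat.Partition n),
      (partitionGraph n).IsNClique (max (sCap p) (tCap p) + 1) s ∧ p ∈ s := by
  rcases le_total (tCap p) (sCap p) with hle | hle
  · rw [max_eq_left hle]
    obtain ⟨i0, -, hi0⟩ := Finset.exists_mem_eq_sup (Finset.range (n + 1))
      ⟨0, Finset.mem_range.mpr (by omega)⟩
      (fun i => Set.ncard {j | AdmissibleTransfer (partFun p) i j})
    have hs : sCap p = Set.ncard {j | AdmissibleTransfer (partFun p) i0 j} := hi0
    rw [hs]
    exact exists_clique_of_adm_j p i0
  · rw [max_eq_right hle]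
    obtain ⟨j0, -, hj0⟩ := Finset.exists_mem_eq_sup (Finset.range (n + 1))
      ⟨0, Finset.mem_range.mpr (by omega)⟩
      (fun j => Set.ncard {i | AdmissibleTransfer (partFun p) i j})
    have hs : tCap p = Set.ncard {i | AdmissibleTransfer (partFun p) i j0} := hj0
    rw [hs]
    exact exists_clique_of_adm_i p j0

/-- imported local dimension formula: for every `n ≥ 1` and every
partition `λ` of `n`, `dim_loc(λ) = max {s(λ), t(λ)}`. -/
theorem local_dimension_formula (n : ℕ) (hn : 1 ≤ n) (p : Nat.Partition n) :
    dimLoc p = max (sCap p) (tCap p) := by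
  set M := max (sCap p) (tCap p) with hM
  have hub : ∀ k ∈ {k | ∃ s : Finset (Nat.Partition n),
      (partitionGraph n).IsNClique k s ∧ p ∈ s}, k ≤ M + 1 := by
    rintro k ⟨s, hs, hp⟩
    exact clique_le p hs hp
  obtain ⟨s, hs, hp⟩ := exists_clique p
  have hmem : M + 1 ∈ {k | ∃ s : Finset (Nat.Partition n),
      (partitionGraph n).IsNClique k s ∧ p ∈ s} := ⟨s, hs, hp⟩
  have homega : omegaLoc p = M + 1 := by
    rw [omegaLoc]
    apply le_antisymm
    · exact csSup_le ⟨M + 1, hmem⟩ hub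
    · exact le_csSup ⟨M + 1, hub⟩ hmem
  rw [dimLoc, homega]
  omega

end PartitionLayers
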